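/- arXiv:1704.02035 — 2 statements merged into one kernel-verified Lean document; each statement's English description precedes it below -/
import Mathlib

section
/- Let A be a unital C*-algebra with a faithful tracial state tr_A, and let x, y ∈ M_n(A) be positive elements. Define the Schur (entrywise) product x ⋆ y by (x ⋆ y)_{i,j} = x_{i,j} · y_{i,j}. Then (tr_A ⊗ Tr_n)(x ⋆ y) ≥ 0, where Tr_n is the unnormalized trace on M_n. -/
/-!
Expanding the diagonal entries of `x = z⋆ z` and `y = w⋆ w`, each summand `tr (xᵢᵢ yᵢᵢ)` is a
sum of terms `tr (a⋆ a b⋆ b)`, and by traciality `tr (a⋆ a b⋆ b) = tr ((a b⋆)⋆ (a b⋆)) ≥ 0`.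
-/

open scoped ComplexOrder

theorem Matrix.star_mul_self_apply_self {m A : Type*} [Fintype m] [NonUnitalSemiring A]
    [StarRing A] (z : Matrix m m A) (i : m) :
    (star z * z) i i = ∑ k, star (z k i) * z k i := by
  simp only [Matrix.mul_apply, Matrix.star_apply]

theorem nonneg_apply_star_mul_self_mul_star_mul_self {A R : Type*} [Semigroup A] [StarMul A]
    [Zero R] [LE R] (tr : A → R) (htr_pos : ∀ a : A, 0 ≤ tr (star a * a))
    (htr_tracial : ∀ a b : A, tr (a * b) = tr (b * a)) (a b : A) :
    0 ≤ tr (star a * a * (star b * b)) := by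
  have h : star (a * star b) * (a * star b) = b * (star a * a * star b) := by
    simp only [star_mul, star_star, mul_assoc]
  calc 0 ≤ tr (star (a * star b) * (a * star b)) := htr_pos _
    _ = tr (star a * a * star b * b) := by rw [h, htr_tracial]
    _ = tr (star a * a * (star b * b)) := by rw [mul_assoc (star a * a)]

theorem sum_apply_diag_mul_diag_nonneg {m A R : Type*} [Fintype m] [NonUnitalRing A]
    [StarRing A] [AddCommMonoid R] [PartialOrder R] [IsOrderedAddMonoid R] (tr : A →+ R)
    (htr_pos : ∀ a : A, 0 ≤ tr (star a * a))
    (htr_tracial : ∀ a b : A, tr (a * b) = tr (b * a)) (z w : Matrix m m A) :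
    0 ≤ ∑ i, tr ((star z * z) i i * (star w * w) i i) := by
  refine Finset.sum_nonneg fun i _ => ?_
  rw [Matrix.star_mul_self_apply_self, Matrix.star_mul_self_apply_self, Finset.sum_mul_sum,
    map_sum]
  refine Finset.sum_nonneg fun k _ => ?_
  rw [map_sum]
  exact Finset.sum_nonneg fun l _ =>
    nonneg_apply_star_mul_self_mul_star_mul_self tr htr_pos htr_tracial _ _

theorem schur_product_trace_nonneg_general
    {A : Type*} [CStarAlgebra A]
    (tr : A →ₗ[ℂ] ℂ)
    (htr_pos : ∀ a : A, 0 ≤ tr (star a * a))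
    (htr_tracial : ∀ a b : A, tr (a * b) = tr (b * a))
    {n : ℕ} (x y : Matrix (Fin n) (Fin n) A)
    (hx : ∃ z : Matrix (Fin n) (Fin n) A, x = star z * z)
    (hy : ∃ z : Matrix (Fin n) (Fin n) A, y = star z * z) :
    0 ≤ ∑ i, tr (x i i * y i i) := by
  obtain ⟨z, rfl⟩ := hx
  obtain ⟨w, rfl⟩ := hy
  exact sum_apply_diag_mul_diag_nonneg tr.toAddMonoidHom htr_pos htr_tracial z w

/-- Let `A` be a unital C*-algebra with a faithful tracial state `tr`,
and let `x, y ∈ Mₙ(A)` be positive (i.e. of the form `star z * z`).  Then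
`(tr ⊗ Trₙ)(x ⋆ y) = ∑ i, tr (xᵢᵢ * yᵢᵢ) ≥ 0`, where `⋆` is the Schur (entrywise) product. -/
theorem schur_product_trace_nonneg
    {A : Type*} [CStarAlgebra A]
    (tr : A →ₗ[ℂ] ℂ)
    (htr_pos : ∀ a : A, 0 ≤ tr (star a * a))
    (htr_tracial : ∀ a b : A, tr (a * b) = tr (b * a))
    (htr_state : tr 1 = 1)
    (htr_faithful : ∀ a : A, tr (star a * a) = 0 → a = 0)
    {n : ℕ} (x y : Matrix (Fin n) (Fin n) A)
    (hx : ∃ z : Matrix (Fin n) (Fin n) A, x = star z * z)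
    (hy : ∃ z : Matrix (Fin n) (Fin n) A, y = star z * z) :
    0 ≤ ∑ i, tr (x i i * y i i) :=
  schur_product_trace_nonneg_general tr htr_pos htr_tracial x y hx hy
end

section
/- Let A be a unital C*-algebra with a faithful tracial state tr_A, and let w, x, y, z ∈ M_n(A) with 0 ≤ w ≤ x and 0 ≤ y ≤ z. Then (tr_A ⊗ Tr_n)(w ⋆ y) ≤ (tr_A ⊗ Tr_n)(x ⋆ z), where ⋆ denotes the entrywise (Schur) product. -/
open scoped ComplexOrder

/-! Positive elements of a star-ordered ring are sums of elements `star s * s`, so a positive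
tracial functional satisfies `tr (p * q) ≥ 0` for `p, q ≥ 0`: by traciality
`tr (star s * s * q) = tr (s * q * star s)`, the trace of a positive element. Hence
`(p, q) ↦ tr (p * q)` is monotone in each argument on positive elements, and the theorem follows
entrywise because the diagonal entries of `star u * u` are positive. -/

section TracialFunctional

variable {R S F : Type*} [NonUnitalSemiring R] [PartialOrder R] [StarRing R] [StarOrderedRing R]
  [AddCommMonoid S] [PartialOrder S] [IsOrderedAddMonoid S] [FunLike F R S]
  [AddMonoidHomClass F R S] (tr : F) (htr_pos : ∀ a : R, 0 ≤ tr (star a * a))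

include htr_pos in
theorem map_nonneg_of_star_mul_self_nonneg {r : R} (hr : 0 ≤ r) : 0 ≤ tr r := by
  replace hr := StarOrderedRing.nonneg_iff.mp hr
  induction hr using AddSubmonoid.closure_induction with
  | mem _ hs => obtain ⟨s, rfl⟩ := hs; exact htr_pos s
  | zero => simp
  | add _ _ _ _ hr₁ hr₂ => rw [map_add]; exact add_nonneg hr₁ hr₂

include htr_pos in
theorem map_mul_nonneg_of_tracial (htr_tracial : ∀ a b : R, tr (a * b) = tr (b * a)) {p q : R}
    (hp : 0 ≤ p) (hq : 0 ≤ q) : 0 ≤ tr (p * q) := by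
  replace hp := StarOrderedRing.nonneg_iff.mp hp
  induction hp using AddSubmonoid.closure_induction with
  | mem _ hs =>
    obtain ⟨s, rfl⟩ := hs
    rw [mul_assoc, htr_tracial, mul_assoc, ← mul_assoc]
    exact map_nonneg_of_star_mul_self_nonneg tr htr_pos (star_right_conjugate_nonneg hq s)
  | zero => simp
  | add _ _ _ _ hp₁ hp₂ => rw [add_mul, map_add]; exact add_nonneg hp₁ hp₂

end TracialFunctional

theorem map_mul_le_map_mul_of_tracial {R S F : Type*} [NonUnitalRing R] [PartialOrder R]
    [StarRing R] [StarOrderedRing R] [AddCommGroup S] [PartialOrder S] [IsOrderedAddMonoid S]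
    [FunLike F R S] [AddMonoidHomClass F R S] (tr : F) (htr_pos : ∀ a : R, 0 ≤ tr (star a * a))
    (htr_tracial : ∀ a b : R, tr (a * b) = tr (b * a)) {p p' q q' : R}
    (hp : 0 ≤ p) (hpp' : p ≤ p') (hq : 0 ≤ q) (hqq' : q ≤ q') :
    tr (p * q) ≤ tr (p' * q') := by
  have h_left : 0 ≤ tr ((p' - p) * q') :=
    map_mul_nonneg_of_tracial tr htr_pos htr_tracial (sub_nonneg.mpr hpp') (hq.trans hqq')
  have h_right : 0 ≤ tr (p * (q' - q)) :=
    map_mul_nonneg_of_tracial tr htr_pos htr_tracial hp (sub_nonneg.mpr hqq')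
  calc tr (p * q) ≤ tr (p * q) + (tr ((p' - p) * q') + tr (p * (q' - q))) :=
        le_add_of_nonneg_right (add_nonneg h_left h_right)
    _ = tr (p' * q') := by rw [← map_add, ← map_add]; congr 1; noncomm_ring

namespace Matrix

variable {n : Type*} [Fintype n]

theorem star_mul_self_apply_self_nonneg {R : Type*} [NonUnitalSemiring R] [PartialOrder R]
    [StarRing R] [StarOrderedRing R] (u : Matrix n n R) (i : n) : 0 ≤ (star u * u) i i := by
  simpa only [mul_apply, star_apply] using
    Finset.sum_nonneg fun k _ => star_mul_self_nonneg (u k i)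

theorem apply_self_le_apply_self_of_sub_eq_star_mul_self {R : Type*} [NonUnitalRing R]
    [PartialOrder R] [StarRing R] [StarOrderedRing R] {x w u : Matrix n n R}
    (h : x - w = star u * u) (i : n) : w i i ≤ x i i := by
  rw [← sub_nonneg, ← sub_apply, h]
  exact star_mul_self_apply_self_nonneg u i

end Matrix

theorem schur_product_trace_mono_general
    {A : Type*} [CStarAlgebra A]
    (tr : A →ₗ[ℂ] ℂ)
    (htr_pos : ∀ a : A, 0 ≤ tr (star a * a))
    (htr_tracial : ∀ a b : A, tr (a * b) = tr (b * a))
    {n : ℕ} (w x y z : Matrix (Fin n) (Fin n) A)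
    (hw : ∃ u : Matrix (Fin n) (Fin n) A, w = star u * u)
    (hwx : ∃ u : Matrix (Fin n) (Fin n) A, x - w = star u * u)
    (hy : ∃ u : Matrix (Fin n) (Fin n) A, y = star u * u)
    (hyz : ∃ u : Matrix (Fin n) (Fin n) A, z - y = star u * u) :
    ∑ i, tr (w i i * y i i) ≤ ∑ i, tr (x i i * z i i) := by
  -- the C⋆-order on `A` is not a global instance
  let _ := CStarAlgebra.spectralOrder A
  have _ := CStarAlgebra.spectralOrderedRing A
  obtain ⟨a, rfl⟩ := hw
  obtain ⟨b, hb⟩ := hwx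
  obtain ⟨c, rfl⟩ := hy
  obtain ⟨d, hd⟩ := hyz
  exact Finset.sum_le_sum fun i _ => map_mul_le_map_mul_of_tracial tr htr_pos htr_tracial
    (a.star_mul_self_apply_self_nonneg i)
    (Matrix.apply_self_le_apply_self_of_sub_eq_star_mul_self hb i)
    (c.star_mul_self_apply_self_nonneg i)
    (Matrix.apply_self_le_apply_self_of_sub_eq_star_mul_self hd i)

/-- Let `A` be a unital C*-algebra with a faithful tracial state `tr`, and let
`w, x, y, z ∈ Mₙ(A)` with `0 ≤ w ≤ x` and `0 ≤ y ≤ z` (in the C*-order, i.e. `w` and the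
differences `x - w`, `z - y` are of the form `star u * u`).  Then
`(tr ⊗ Trₙ)(w ⋆ y) ≤ (tr ⊗ Trₙ)(x ⋆ z)`, where `⋆` is the Schur (entrywise) product. -/
theorem schur_product_trace_mono
    {A : Type*} [CStarAlgebra A]
    (tr : A →ₗ[ℂ] ℂ)
    (htr_pos : ∀ a : A, 0 ≤ tr (star a * a))
    (htr_tracial : ∀ a b : A, tr (a * b) = tr (b * a))
    (htr_state : tr 1 = 1)
    (htr_faithful : ∀ a : A, tr (star a * a) = 0 → a = 0)
    {n : ℕ} (w x y z : Matrix (Fin n) (Fin n) A)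
    (hw : ∃ u : Matrix (Fin n) (Fin n) A, w = star u * u)
    (hwx : ∃ u : Matrix (Fin n) (Fin n) A, x - w = star u * u)
    (hy : ∃ u : Matrix (Fin n) (Fin n) A, y = star u * u)
    (hyz : ∃ u : Matrix (Fin n) (Fin n) A, z - y = star u * u) :
    ∑ i, tr (w i i * y i i) ≤ ∑ i, tr (x i i * z i i) :=
  schur_product_trace_mono_general tr htr_pos htr_tracial w x y z hw hwx hy hyz
end
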